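/- Let Ω ⊂ ℝⁿ have finite Lebesgue measure, let γ ∈ L¹(ℝⁿ) be even, and let f : Ω × ℝ → ℝ be a Carathéodory function with |f(x,t)| ≤ a₁ + a₂|t|^α for all x ∈ Ω, t ∈ ℝ, where α ≥ 1. Let u, v ∈ L²(ℝⁿ) vanish almost everywhere outside Ω with u|_Ω, v|_Ω ∈ L^{α+1}(Ω). Then the function i(τ) := I[u + τv] is differentiable at τ = 0 with i′(0) = B[u,v] − ∫_Ω f(x,u(x)) v(x) dx. In particular, if u is a critical point of I in the sense that i′(0) = 0 for every such v, then B[u,v] = ∫_Ω f(x,u(x)) v(x) dx for every such v, i.e. u is a weak solution of −𝓛u = f(x,u) in Ω. -/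

import Mathlib

open MeasureTheory

/-- The nonlocal bilinear form
`B[u,v] = (1/2) ∬ (u(y)-u(x)) γ(x-y) (v(y)-v(x)) dy dx`. -/
noncomputable def nonlocalForm (n : ℕ) (γ u v : EuclideanSpace ℝ (Fin n) → ℝ) : ℝ :=
  (1/2) * ∫ x, ∫ y, (u y - u x) * γ (x - y) * (v y - v x)

/-- `F(x,t) = ∫₀ᵗ f(x,τ) dτ`. -/
noncomputable def Fanti (n : ℕ) (f : EuclideanSpace ℝ (Fin n) → ℝ → ℝ)
    (x : EuclideanSpace ℝ (Fin n)) (t : ℝ) : ℝ :=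
  ∫ τ in (0:ℝ)..t, f x τ

/-- The energy `I[u] = (1/2) B[u,u] − ∫_Ω F(x,u(x)) dx`. -/
noncomputable def energy (n : ℕ) (Ω : Set (EuclideanSpace ℝ (Fin n)))
    (γ : EuclideanSpace ℝ (Fin n) → ℝ) (f : EuclideanSpace ℝ (Fin n) → ℝ → ℝ)
    (u : EuclideanSpace ℝ (Fin n) → ℝ) : ℝ :=
  (1/2) * nonlocalForm n γ u u - ∫ x in Ω, Fanti n f x (u x)

/-- Admissible test functions: `v ∈ L²(ℝⁿ)`, `v = 0` a.e. outside `Ω`, and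
`v|_Ω ∈ L^{α+1}(Ω)`. -/
def Admissible (n : ℕ) (Ω : Set (EuclideanSpace ℝ (Fin n))) (α : ℝ)
    (v : EuclideanSpace ℝ (Fin n) → ℝ) : Prop :=
  MemLp v 2 (volume : Measure (EuclideanSpace ℝ (Fin n))) ∧
    (∀ᵐ x, x ∉ Ω → v x = 0) ∧
    MemLp v (ENNReal.ofReal (α + 1)) (volume.restrict Ω)

/-
The double integrand `(u y - u x) γ (x - y) (v y - v x)` is dominated by
`|γ (x - y)| (u x² + u y² + v x² + v y²)`, and each of these terms is a convolution integrand
of `γ` with an `L¹` function, so it is integrable on `ℝⁿ × ℝⁿ`. Fubini then makes `B` bilinear,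
and `τ ↦ B[u + τv, u + τv] / 2` is a quadratic polynomial with derivative `B[u,v]` at `0`.
For the potential term, with `w = |u| + |v| ∈ L^{α+1}(Ω)`, the growth bound dominates both
`F(x, u + τv)` and its `τ`-derivative `f(x, u + τv) v` for `|τ| < 1` by
`(a₁ + a₂ w^α) w ∈ L¹(Ω)`, so it may be differentiated under the integral sign.
The weak formulation follows from uniqueness of derivatives.
-/

section NonlocalIntegrand

variable {G : Type*} [AddCommGroup G] [MeasurableSpace G] [MeasurableAdd₂ G] [MeasurableNeg G]
  {μ : Measure G} [SFinite μ] [μ.IsAddRightInvariant]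

def nonlocalIntegrand (γ u v : G → ℝ) (p : G × G) : ℝ :=
  (u p.2 - u p.1) * γ (p.1 - p.2) * (v p.2 - v p.1)

lemma abs_sub_mul_mul_sub_le (a b c d e : ℝ) :
    |(a - b) * c * (d - e)| ≤ |c| * (a ^ 2 + b ^ 2 + d ^ 2 + e ^ 2) := by
  have h : |(a - b) * (d - e)| ≤ a ^ 2 + b ^ 2 + d ^ 2 + e ^ 2 :=
    abs_le.2 ⟨by nlinarith [sq_nonneg (a - b + d - e), sq_nonneg (a + b), sq_nonneg (d + e)],
      by nlinarith [sq_nonneg (a - b - d + e), sq_nonneg (a + b), sq_nonneg (d + e)]⟩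
  calc |(a - b) * c * (d - e)| = |c| * |(a - b) * (d - e)| := by
        rw [abs_mul, abs_mul, abs_mul]; ring
    _ ≤ _ := mul_le_mul_of_nonneg_left h (abs_nonneg c)

lemma integrable_mul_comp_sub_snd {g γ : G → ℝ} (hg : Integrable g μ) (hγ : Integrable γ μ) :
    Integrable (fun p : G × G => g p.2 * γ (p.1 - p.2)) (μ.prod μ) :=
  hg.convolution_integrand (ContinuousLinearMap.mul ℝ ℝ) hγ

lemma integrable_mul_comp_sub_fst [μ.IsNegInvariant] {g γ : G → ℝ} (hg : Integrable g μ)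
    (hγ : Integrable γ μ) :
    Integrable (fun p : G × G => g p.1 * γ (p.1 - p.2)) (μ.prod μ) := by
  simpa [Function.comp_def] using (integrable_mul_comp_sub_snd hg hγ.comp_neg).swap

lemma integrable_nonlocalIntegrand [μ.IsNegInvariant] {γ u v : G → ℝ} (hγ : Integrable γ μ)
    (hu : MemLp u 2 μ) (hv : MemLp v 2 μ) : Integrable (nonlocalIntegrand γ u v) (μ.prod μ) := by
  have hsq {w : G → ℝ} (hw : MemLp w 2 μ) : Integrable
      (fun p : G × G => |γ (p.1 - p.2)| * (w p.2 ^ 2 + w p.1 ^ 2)) (μ.prod μ) := by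
    refine ((integrable_mul_comp_sub_snd hw.integrable_sq hγ.abs).add
      (integrable_mul_comp_sub_fst hw.integrable_sq hγ.abs)).congr (.of_forall fun p => ?_)
    simp only [Pi.add_apply]
    ring
  have hγ_meas : AEStronglyMeasurable (fun p : G × G => γ (p.1 - p.2)) (μ.prod μ) :=
    hγ.aestronglyMeasurable.comp_quasiMeasurePreserving
      (quasiMeasurePreserving_sub_of_right_invariant μ μ)
  have hdiff_meas {w : G → ℝ} (hw : MemLp w 2 μ) :
      AEStronglyMeasurable (fun p : G × G => w p.2 - w p.1) (μ.prod μ) :=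
    hw.aestronglyMeasurable.comp_snd.sub hw.aestronglyMeasurable.comp_fst
  refine ((hsq hu).add (hsq hv)).mono' (((hdiff_meas hu).mul hγ_meas).mul (hdiff_meas hv))
    (.of_forall fun p => ?_)
  calc ‖nonlocalIntegrand γ u v p‖
      ≤ |γ (p.1 - p.2)| * (u p.2 ^ 2 + u p.1 ^ 2 + v p.2 ^ 2 + v p.1 ^ 2) :=
        abs_sub_mul_mul_sub_le _ _ _ _ _
    _ = _ := by simp only [Pi.add_apply]; ring

end NonlocalIntegrand

section NonlocalForm

variable {n : ℕ} {γ u v : EuclideanSpace ℝ (Fin n) → ℝ}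

lemma nonlocalForm_eq_integral_prod
    (h : Integrable (nonlocalIntegrand γ u v) (volume.prod volume)) :
    nonlocalForm n γ u v = 1 / 2 * ∫ p, nonlocalIntegrand γ u v p ∂(volume.prod volume) := by
  rw [nonlocalForm, integral_prod _ h]
  rfl

lemma nonlocalForm_add_smul_self (hγ : Integrable γ) (hu : MemLp u 2) (hv : MemLp v 2) (τ : ℝ) :
    nonlocalForm n γ (fun x => u x + τ * v x) (fun x => u x + τ * v x) =
      nonlocalForm n γ u u + 2 * τ * nonlocalForm n γ u v + τ ^ 2 * nonlocalForm n γ v v := by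
  have huu := integrable_nonlocalIntegrand hγ hu hu
  have huv := integrable_nonlocalIntegrand hγ hu hv
  have hvv := integrable_nonlocalIntegrand hγ hv hv
  have hw : MemLp (fun x => u x + τ * v x) 2 := hu.add (hv.const_mul τ)
  have hexpand (p) : nonlocalIntegrand γ (fun x => u x + τ * v x) (fun x => u x + τ * v x) p =
      nonlocalIntegrand γ u u p + 2 * τ * nonlocalIntegrand γ u v p
        + τ ^ 2 * nonlocalIntegrand γ v v p := by
    simp only [nonlocalIntegrand]
    ring
  have huu_uv : Integrable (fun p => nonlocalIntegrand γ u u p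
      + 2 * τ * nonlocalIntegrand γ u v p) (volume.prod volume) := huu.add (huv.const_mul _)
  rw [nonlocalForm_eq_integral_prod (integrable_nonlocalIntegrand hγ hw hw)]
  simp_rw [hexpand]
  rw [integral_add huu_uv (hvv.const_mul _), integral_add huu (huv.const_mul _),
    integral_const_mul, integral_const_mul, nonlocalForm_eq_integral_prod huu,
    nonlocalForm_eq_integral_prod huv, nonlocalForm_eq_integral_prod hvv]
  ring

lemma hasDerivAt_half_nonlocalForm_add_smul_self (hγ : Integrable γ) (hu : MemLp u 2)
    (hv : MemLp v 2) :
    HasDerivAt (fun τ : ℝ => 1 / 2 * nonlocalForm n γ (fun x => u x + τ * v x)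
      (fun x => u x + τ * v x)) (nonlocalForm n γ u v) 0 := by
  have hpoly := ((((hasDerivAt_id (0 : ℝ)).const_mul (2 * nonlocalForm n γ u v)).const_add
    (nonlocalForm n γ u u)).add ((hasDerivAt_pow 2 (0 : ℝ)).mul_const
      (nonlocalForm n γ v v))).const_mul (1 / 2)
  refine (hpoly.congr_deriv (by simp)).congr_of_eventuallyEq (.of_forall fun τ => ?_)
  simp only [nonlocalForm_add_smul_self hγ hu hv, Pi.add_apply, id]
  ring

end NonlocalForm

section Primitive

variable {X : Type*} [MeasurableSpace X] {μ : Measure X}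

lemma aestronglyMeasurable_caratheodory_comp {g : X → ℝ → ℝ}
    (hmeas : ∀ t, Measurable fun x => g x t) (hcont : ∀ x, Continuous (g x)) {w : X → ℝ}
    (hw : AEMeasurable w μ) : AEStronglyMeasurable (fun x => g x (w x)) μ :=
  ((measurable_uncurry_of_continuous_of_measurable (u := fun t x => g x t) hcont
    hmeas).comp_aemeasurable (hw.prodMk aemeasurable_id)).aestronglyMeasurable

lemma measurable_intervalIntegral_of_caratheodory {f : X → ℝ → ℝ}
    (hmeas : ∀ t, Measurable fun x => f x t) (hcont : ∀ x, Continuous (f x)) (t : ℝ) :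
    Measurable fun x => ∫ s in (0 : ℝ)..t, f x s := by
  have hf : StronglyMeasurable (Function.uncurry f) :=
    ((measurable_uncurry_of_continuous_of_measurable (u := fun s x => f x s) hcont
      hmeas).comp measurable_swap).stronglyMeasurable
  exact (hf.integral_prod_right.sub hf.integral_prod_right).measurable

lemma abs_intervalIntegral_zero_le {g : ℝ → ℝ} {C w t : ℝ} (hg : ∀ s, |s| ≤ w → |g s| ≤ C)
    (ht : |t| ≤ w) : |∫ s in (0 : ℝ)..t, g s| ≤ C * w := by
  have hC : 0 ≤ C := (abs_nonneg _).trans (hg 0 (by simpa using (abs_nonneg t).trans ht))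
  have hbound : ∀ s ∈ Set.uIoc (0 : ℝ) t, ‖g s‖ ≤ C := fun s hs => by
    have := Set.abs_sub_left_of_mem_uIcc (Set.uIoc_subset_uIcc hs)
    rw [sub_zero, sub_zero] at this
    exact hg s (this.trans ht)
  calc |∫ s in (0 : ℝ)..t, g s| ≤ C * |t - 0| :=
        intervalIntegral.norm_integral_le_of_norm_le_const hbound
    _ ≤ C * w := by rw [sub_zero]; exact mul_le_mul_of_nonneg_left ht hC

lemma integrable_growth_mul_self [IsFiniteMeasure μ] {w : X → ℝ} {α : ℝ} (hα : 0 ≤ α)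
    (hw : MemLp w (ENNReal.ofReal (α + 1)) μ) (hw0 : 0 ≤ w) (a₁ a₂ : ℝ) :
    Integrable (fun x => (a₁ + a₂ * w x ^ α) * w x) μ := by
  have hp : (1 : ENNReal) ≤ ENNReal.ofReal (α + 1) := by
    rw [← ENNReal.ofReal_one]; exact ENNReal.ofReal_le_ofReal (by linarith)
  have hpow := hw.integrable_norm_rpow (by positivity) ENNReal.ofReal_ne_top
  rw [ENNReal.toReal_ofReal (by linarith)] at hpow
  refine ((hw.integrable hp).const_mul a₁).add (hpow.const_mul a₂) |>.congr
    (.of_forall fun x => ?_)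
  simp only [Pi.add_apply, Real.norm_of_nonneg (hw0 x), Real.rpow_add_one' (hw0 x) (by linarith)]
  ring

theorem hasDerivAt_integral_intervalIntegral_add_smul [IsFiniteMeasure μ] {f : X → ℝ → ℝ}
    (hmeas : ∀ t, Measurable fun x => f x t) (hcont : ∀ x, Continuous (f x))
    {a₁ a₂ α : ℝ} (ha₂ : 0 ≤ a₂) (hα : 0 ≤ α)
    (hgrowth : ∀ᵐ x ∂μ, ∀ t, |f x t| ≤ a₁ + a₂ * |t| ^ α)
    {u v : X → ℝ} (hu : MemLp u (ENNReal.ofReal (α + 1)) μ)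
    (hv : MemLp v (ENNReal.ofReal (α + 1)) μ) :
    HasDerivAt (fun τ : ℝ => ∫ x, (∫ s in (0 : ℝ)..u x + τ * v x, f x s) ∂μ)
      (∫ x, f x (u x) * v x ∂μ) 0 := by
  set w : X → ℝ := fun x => |u x| + |v x|
  have hw : MemLp w (ENNReal.ofReal (α + 1)) μ := hu.abs.add hv.abs
  have hw0 : 0 ≤ w := fun x => by positivity
  have hnear (x : X) {τ : ℝ} (hτ : τ ∈ Metric.ball (0 : ℝ) 1) : |u x + τ * v x| ≤ w x := by
    rw [mem_ball_zero_iff, Real.norm_eq_abs] at hτ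
    calc |u x + τ * v x| ≤ |u x| + |τ| * |v x| := (abs_add_le _ _).trans_eq (by rw [abs_mul])
      _ ≤ w x := add_le_add_right (mul_le_of_le_one_left (abs_nonneg _) hτ.le) _
  have hlocal : ∀ᵐ x ∂μ, ∀ s, |s| ≤ w x → |f x s| ≤ a₁ + a₂ * w x ^ α :=
    hgrowth.mono fun x hx s hs => (hx s).trans <|
      add_le_add_right
        (mul_le_mul_of_nonneg_left (Real.rpow_le_rpow (abs_nonneg s) hs hα) ha₂) a₁
  have hprim (x : X) (t : ℝ) : HasDerivAt (fun t => ∫ s in (0 : ℝ)..t, f x s) (f x t) t :=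
    ((hcont x).integral_hasStrictDerivAt 0 t).hasDerivAt
  have hpath (τ : ℝ) : AEMeasurable (fun x => u x + τ * v x) μ :=
    hu.aestronglyMeasurable.aemeasurable.add (hv.aestronglyMeasurable.aemeasurable.const_mul τ)
  have hF_meas (τ : ℝ) :
      AEStronglyMeasurable (fun x => ∫ s in (0 : ℝ)..u x + τ * v x, f x s) μ :=
    aestronglyMeasurable_caratheodory_comp
      (measurable_intervalIntegral_of_caratheodory hmeas hcont)
      (fun x => continuous_iff_continuousAt.2 fun t => (hprim x t).continuousAt) (hpath τ)
  obtain ⟨-, hderiv⟩ := hasDerivAt_integral_of_dominated_loc_of_deriv_le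
    (F' := fun τ x => f x (u x + τ * v x) * v x) (bound := fun x => (a₁ + a₂ * w x ^ α) * w x)
    (Metric.ball_mem_nhds 0 one_pos) (.of_forall hF_meas)
    ((integrable_growth_mul_self hα hw hw0 a₁ a₂).mono' (hF_meas 0) <| hlocal.mono fun x hx =>
      abs_intervalIntegral_zero_le hx (hnear x (Metric.mem_ball_self one_pos)))
    ((aestronglyMeasurable_caratheodory_comp hmeas hcont (hpath 0)).mul hv.aestronglyMeasurable)
    (hlocal.mono fun x hx τ hτ => by
      rw [norm_mul, Real.norm_eq_abs, Real.norm_eq_abs]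
      exact mul_le_mul (hx _ (hnear x hτ)) (le_add_of_nonneg_left (abs_nonneg _)) (abs_nonneg _)
        ((abs_nonneg _).trans (hx 0 (by simpa using hw0 x))))
    (integrable_growth_mul_self hα hw hw0 a₁ a₂)
    (.of_forall fun x τ _ => (hprim x _).comp τ ((hasDerivAt_mul_const (v x)).const_add (u x)))
  simpa only [zero_mul, add_zero] using hderiv

end Primitive

theorem critical_point_is_weak_solution_general
    (n : ℕ) (Ω : Set (EuclideanSpace ℝ (Fin n))) (hΩ : MeasurableSet Ω)
    (hΩfin : volume Ω < ⊤)
    (γ : EuclideanSpace ℝ (Fin n) → ℝ)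
    (hγ : Integrable γ)
    (f : EuclideanSpace ℝ (Fin n) → ℝ → ℝ)
    (hmeas : ∀ t : ℝ, Measurable fun x => f x t)
    (hcont : ∀ x, Continuous (f x))
    (a₁ a₂ α : ℝ) (ha₂ : 0 < a₂) (hα : 1 ≤ α)
    (hgrowth : ∀ x ∈ Ω, ∀ t : ℝ, |f x t| ≤ a₁ + a₂ * |t| ^ α)
    (u : EuclideanSpace ℝ (Fin n) → ℝ) (hu : Admissible n Ω α u) :
    (∀ v : EuclideanSpace ℝ (Fin n) → ℝ, Admissible n Ω α v →
      HasDerivAt (fun τ : ℝ => energy n Ω γ f (fun x => u x + τ * v x))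
        (nonlocalForm n γ u v - ∫ x in Ω, f x (u x) * v x) 0) ∧
    ((∀ v : EuclideanSpace ℝ (Fin n) → ℝ, Admissible n Ω α v →
        HasDerivAt (fun τ : ℝ => energy n Ω γ f (fun x => u x + τ * v x)) 0 0) →
      ∀ v : EuclideanSpace ℝ (Fin n) → ℝ, Admissible n Ω α v →
        nonlocalForm n γ u v = ∫ x in Ω, f x (u x) * v x) := by
  obtain ⟨hu2, -, huΩ⟩ := hu
  have : IsFiniteMeasure (volume.restrict Ω) := isFiniteMeasure_restrict.2 hΩfin.ne
  have hderiv (v : EuclideanSpace ℝ (Fin n) → ℝ) (hv : Admissible n Ω α v) :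
      HasDerivAt (fun τ : ℝ => energy n Ω γ f (fun x => u x + τ * v x))
        (nonlocalForm n γ u v - ∫ x in Ω, f x (u x) * v x) 0 :=
    (hasDerivAt_half_nonlocalForm_add_smul_self hγ hu2 hv.1).sub
      (hasDerivAt_integral_intervalIntegral_add_smul hmeas hcont ha₂.le (by linarith)
        (ae_restrict_of_forall_mem hΩ hgrowth) huΩ hv.2.2)
  exact ⟨hderiv, fun hcrit v hv => sub_eq_zero.1 ((hderiv v hv).unique (hcrit v hv))⟩

/-- Critical points of the nonlocal energy are weak solutions: for admissible `u` and
`v`, the map `τ ↦ I[u + τv]` is differentiable at `0` with derivative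
`B[u,v] − ∫_Ω f(x,u)v dx`; consequently, if this derivative vanishes for every
admissible `v`, then `B[u,v] = ∫_Ω f(x,u)v dx` for every admissible `v`, i.e. `u` is a
weak solution of `−𝓛u = f(x,u)` in `Ω`. -/
theorem critical_point_is_weak_solution
    (n : ℕ) (Ω : Set (EuclideanSpace ℝ (Fin n))) (hΩ : MeasurableSet Ω)
    (hΩfin : volume Ω < ⊤)
    (γ : EuclideanSpace ℝ (Fin n) → ℝ)
    (hγ : Integrable γ) (hγeven : ∀ z, γ (-z) = γ z)
    (f : EuclideanSpace ℝ (Fin n) → ℝ → ℝ)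
    (hmeas : ∀ t : ℝ, Measurable fun x => f x t)
    (hcont : ∀ x, Continuous (f x))
    (a₁ a₂ α : ℝ) (ha₁ : 0 < a₁) (ha₂ : 0 < a₂) (hα : 1 ≤ α)
    (hgrowth : ∀ x ∈ Ω, ∀ t : ℝ, |f x t| ≤ a₁ + a₂ * |t| ^ α)
    (u : EuclideanSpace ℝ (Fin n) → ℝ) (hu : Admissible n Ω α u) :
    (∀ v : EuclideanSpace ℝ (Fin n) → ℝ, Admissible n Ω α v →
      HasDerivAt (fun τ : ℝ => energy n Ω γ f (fun x => u x + τ * v x))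
        (nonlocalForm n γ u v - ∫ x in Ω, f x (u x) * v x) 0) ∧
    ((∀ v : EuclideanSpace ℝ (Fin n) → ℝ, Admissible n Ω α v →
        HasDerivAt (fun τ : ℝ => energy n Ω γ f (fun x => u x + τ * v x)) 0 0) →
      ∀ v : EuclideanSpace ℝ (Fin n) → ℝ, Admissible n Ω α v →
        nonlocalForm n γ u v = ∫ x in Ω, f x (u x) * v x) :=
  critical_point_is_weak_solution_general n Ω hΩ hΩfin γ hγ f hmeas hcont a₁ a₂ α ha₂ hα hgrowth u
    hu
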